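/- Let Γ = GenCov(Δ,G,ω,ζ). Then Γ contains a pair of distinct parallel darts if and only if there exist darts x, y of Δ and h ∈ ω(beg x) with beg x = beg y, term x = term y, ζ(y)·h·ζ(x)⁻¹ ∈ ω(term x), and either x ≠ y, or x = y and h ∉ ω(x). -/

import Mathlib

/-- A graph in the sense of Malnič–Nedela–Škoviera: vertices, darts,
an initial-vertex function and an involutory dart-reversal. -/
structure PreGraph (V D : Type*) where
  beg : D → V
  inv : D → D
  inv_inv : ∀ x, inv (inv x) = x

/-- The terminal vertex of a dart. -/
def PreGraph.term {V D : Type*} (Δ : PreGraph V D) (x : D) : V := Δ.beg (Δ.inv x)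

/-- A generalised voltage graph on a graph `Δ`: a weight function
(given on vertices by `ωv` and on darts by `ωd`) and a voltage assignment `ζ`
satisfying the three defining conditions. -/
structure GenVoltage (V D : Type*) (G : Type*) [Group G] (Δ : PreGraph V D) where
  ωv : V → Subgroup G
  ωd : D → Subgroup G
  ζ : D → G
  wle : ∀ x, ωd x ≤ ωv (Δ.beg x)
  wconj : ∀ x g, g ∈ ωd x ↔ ζ x * g * (ζ x)⁻¹ ∈ ωd (Δ.inv x)
  wcyc : ∀ x, ζ (Δ.inv x) * ζ x ∈ ωd x

namespace GenVoltage

variable {V D G : Type*} [Group G] {Δ : PreGraph V D} (Θ : GenVoltage V D G Δ)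

/-- Vertices of the generalised cover: pairs `(v, ω(v)g)` of a vertex of `Δ`
and a right coset of its weight group. -/
abbrev CovV := Σ v : V, Quotient (QuotientGroup.rightRel (Θ.ωv v))

/-- Darts of the generalised cover: pairs `(x, ω(x)g)`. -/
abbrev CovD := Σ x : D, Quotient (QuotientGroup.rightRel (Θ.ωd x))

/-- The cover vertex `(v, ω(v)g)`. -/
def vmk (v : V) (g : G) : Θ.CovV := ⟨v, Quotient.mk _ g⟩

/-- The cover dart `(x, ω(x)g)`. -/
def dmk (x : D) (g : G) : Θ.CovD := ⟨x, Quotient.mk _ g⟩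

/-- `beg` of the cover: `(x, ω(x)g) ↦ (beg x, ω(beg x)g)`. -/
def covBeg : Θ.CovD → Θ.CovV :=
  fun p => ⟨Δ.beg p.1, Quotient.map id (fun g h hgh => by
    have h1 : h * g⁻¹ ∈ Θ.ωd p.1 := QuotientGroup.rightRel_apply.mp hgh
    exact QuotientGroup.rightRel_apply.mpr (Θ.wle p.1 h1)) p.2⟩

/-- `inv` of the cover: `(x, ω(x)g) ↦ (x⁻¹, ω(x⁻¹)ζ(x)g)`. -/
def covInv : Θ.CovD → Θ.CovD :=
  fun p => ⟨Δ.inv p.1, Quotient.map (fun g => Θ.ζ p.1 * g) (fun g h hgh => by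
    have h1 : h * g⁻¹ ∈ Θ.ωd p.1 := QuotientGroup.rightRel_apply.mp hgh
    have h2 := (Θ.wconj p.1 (h * g⁻¹)).1 h1
    exact QuotientGroup.rightRel_apply.mpr (by simpa [mul_assoc, mul_inv_rev] using h2)) p.2⟩

/-- Terminal vertex of a cover dart. -/
def covTerm : Θ.CovD → Θ.CovV := fun p => Θ.covBeg (Θ.covInv p)

/-- Right translation by `h` on the cover: `(x, ω(x)g) ↦ (x, ω(x)gh)`, on vertices. -/
def covRightV (h : G) : Θ.CovV → Θ.CovV :=
  fun p => ⟨p.1, Quotient.map (fun g => g * h) (fun a b hab => by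
    have h1 := QuotientGroup.rightRel_apply.mp hab
    exact QuotientGroup.rightRel_apply.mpr (by simpa [mul_assoc, mul_inv_rev] using h1)) p.2⟩

/-- Right translation by `h` on the cover, on darts. -/
def covRightD (h : G) : Θ.CovD → Θ.CovD :=
  fun p => ⟨p.1, Quotient.map (fun g => g * h) (fun a b hab => by
    have h1 := QuotientGroup.rightRel_apply.mp hab
    exact QuotientGroup.rightRel_apply.mpr (by simpa [mul_assoc, mul_inv_rev] using h1)) p.2⟩

end GenVoltage

/-- Walks with respect to abstract initial/terminal vertex functions `B`, `T`:
`WalkBT B T u v l` means `l` is a walk from `u` to `v`. -/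
inductive WalkBT {Vt Dt : Type*} (B T : Dt → Vt) : Vt → Vt → List Dt → Prop
  | nil (v : Vt) : WalkBT B T v v []
  | cons (x : Dt) {v : Vt} {l : List Dt} :
      WalkBT B T (T x) v l → WalkBT B T (B x) v (x :: l)

/-! A cover dart is `(x, ω(x)g)`, and `ω(v)a = ω(v)b` iff `b a⁻¹ ∈ ω(v)`. So with `h = k g⁻¹`,
every condition on a pair `(x, ω(x)g)`, `(y, ω(y)k)` becomes a membership of `h` or of
`ζ(y) h ζ(x)⁻¹`, and the pair `(x, ω(x))`, `(y, ω(y)h)` realises any such data. -/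

theorem sigma_mk_rightRel_eq_iff {ι G : Type*} [Group G] (H : ι → Subgroup G) (i j : ι)
    (g k : G) :
    (⟨i, Quotient.mk _ g⟩ : Σ i, Quotient (QuotientGroup.rightRel (H i))) = ⟨j, Quotient.mk _ k⟩ ↔
      i = j ∧ k * g⁻¹ ∈ H i := by
  constructor
  · intro h
    obtain ⟨rfl, hq⟩ := Sigma.mk.inj_iff.mp h
    exact ⟨rfl, QuotientGroup.rightRel_apply.mp (Quotient.exact (eq_of_heq hq))⟩
  · rintro ⟨rfl, hm⟩
    exact congrArg _ (Quotient.sound (QuotientGroup.rightRel_apply.mpr hm))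

namespace GenVoltage

variable {V D G : Type*} [Group G] {Δ : PreGraph V D} (Θ : GenVoltage V D G Δ)

theorem vmk_eq_vmk_iff (u v : V) (g k : G) :
    Θ.vmk u g = Θ.vmk v k ↔ u = v ∧ k * g⁻¹ ∈ Θ.ωv u :=
  sigma_mk_rightRel_eq_iff Θ.ωv u v g k

theorem dmk_eq_dmk_iff (x y : D) (g k : G) :
    Θ.dmk x g = Θ.dmk y k ↔ x = y ∧ k * g⁻¹ ∈ Θ.ωd x :=
  sigma_mk_rightRel_eq_iff Θ.ωd x y g k

theorem dmk_ne_dmk_iff (x y : D) (g k : G) :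
    Θ.dmk x g ≠ Θ.dmk y k ↔ x ≠ y ∨ (x = y ∧ k * g⁻¹ ∉ Θ.ωd x) := by
  rw [Ne, dmk_eq_dmk_iff]
  tauto

theorem exists_dmk_eq (p : Θ.CovD) : ∃ x g, Θ.dmk x g = p := by
  obtain ⟨x, q⟩ := p
  obtain ⟨g, rfl⟩ := Quotient.exists_rep q
  exact ⟨x, g, rfl⟩

theorem covBeg_dmk (x : D) (g : G) : Θ.covBeg (Θ.dmk x g) = Θ.vmk (Δ.beg x) g :=
  rfl

theorem covTerm_dmk (x : D) (g : G) :
    Θ.covTerm (Θ.dmk x g) = Θ.vmk (Δ.term x) (Θ.ζ x * g) :=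
  rfl

theorem dmk_parallel_iff (x y : D) (g k : G) :
    Θ.covBeg (Θ.dmk x g) = Θ.covBeg (Θ.dmk y k) ∧
        Θ.covTerm (Θ.dmk x g) = Θ.covTerm (Θ.dmk y k) ↔
      Δ.beg x = Δ.beg y ∧ Δ.term x = Δ.term y ∧ k * g⁻¹ ∈ Θ.ωv (Δ.beg x) ∧
        Θ.ζ y * (k * g⁻¹) * (Θ.ζ x)⁻¹ ∈ Θ.ωv (Δ.term x) := by
  have hζ : Θ.ζ y * k * (Θ.ζ x * g)⁻¹ = Θ.ζ y * (k * g⁻¹) * (Θ.ζ x)⁻¹ := by group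
  rw [covBeg_dmk, covBeg_dmk, covTerm_dmk, covTerm_dmk, vmk_eq_vmk_iff, vmk_eq_vmk_iff, hζ]
  tauto

end GenVoltage

/-- Characterisation of pairs of distinct parallel darts in the generalised cover. -/
theorem stmt_16 {V D G : Type*} [Group G] {Δ : PreGraph V D}
    (Θ : GenVoltage V D G Δ) :
    (∃ p q : Θ.CovD, p ≠ q ∧ Θ.covBeg p = Θ.covBeg q ∧ Θ.covTerm p = Θ.covTerm q) ↔
      ∃ (x y : D) (h : G), Δ.beg x = Δ.beg y ∧ Δ.term x = Δ.term y ∧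
        h ∈ Θ.ωv (Δ.beg x) ∧ Θ.ζ y * h * (Θ.ζ x)⁻¹ ∈ Θ.ωv (Δ.term x) ∧
        (x ≠ y ∨ (x = y ∧ h ∉ Θ.ωd x)) := by
  constructor
  · rintro ⟨p, q, hne, hpar⟩
    obtain ⟨x, g, rfl⟩ := Θ.exists_dmk_eq p
    obtain ⟨y, k, rfl⟩ := Θ.exists_dmk_eq q
    obtain ⟨hb, ht, hk, hζ⟩ := (Θ.dmk_parallel_iff x y g k).mp hpar
    exact ⟨x, y, k * g⁻¹, hb, ht, hk, hζ, (Θ.dmk_ne_dmk_iff x y g k).mp hne⟩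
  · rintro ⟨x, y, h, hb, ht, hh, hζ, hne⟩
    refine ⟨Θ.dmk x 1, Θ.dmk y h, ?_, (Θ.dmk_parallel_iff x y 1 h).mpr ?_⟩
    · rwa [Θ.dmk_ne_dmk_iff, inv_one, mul_one]
    · rw [inv_one, mul_one]
      exact ⟨hb, ht, hh, hζ⟩
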